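/- arXiv:2403.19008 — 3 statements merged into one kernel-verified Lean document; each statement's English description precedes it below -/
import Mathlib

section
/- Let X and Y be Noetherian schemes of finite Krull dimension whose underlying topological spaces are catenary, and let f : X → Y be an integral morphism of schemes. Assume that every irreducible component of X is equicodimensional. Then f is catenarious: for every pair of irreducible closed subsets T ⊆ T′ of X one has codim(T, T′) ≥ codim(cl(f(T)), cl(f(T′))). -/
open TopologicalSpace

section TopDefs

variable {α β : Type*} [TopologicalSpace α] [TopologicalSpace β]

/-- The closure of a point, as an irreducible closed subset. -/
noncomputable def ptIC (x : α) : IrreducibleCloseds α :=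
  ⟨closure {x}, isIrreducible_singleton.closure, isClosed_closure⟩

/-- `codim(T, T')`: the supremum of lengths `n` of chains
`T = T₀ ⊊ T₁ ⊊ ⋯ ⊊ Tₙ ⊆ T'` of irreducible closed subsets. -/
noncomputable def icCodim (T T' : IrreducibleCloseds α) : ℕ∞ :=
  Set.chainHeight {Z : IrreducibleCloseds α | T < Z ∧ Z ≤ T'} (· < ·)

/-- The codimension of an irreducible closed subset in the whole space. -/
noncomputable def spCodim (T : IrreducibleCloseds α) : ℕ∞ :=
  Set.chainHeight {Z : IrreducibleCloseds α | T < Z} (· < ·)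

/-- The closure of the image of an irreducible closed subset under a continuous map,
as an irreducible closed subset. -/
noncomputable def imageIC (f : α → β) (hf : Continuous f) (T : IrreducibleCloseds α) :
    IrreducibleCloseds β :=
  ⟨closure (f '' (T : Set α)),
    (T.isIrreducible.image f hf.continuousOn).closure, isClosed_closure⟩

/-- `p` is a maximal chain of irreducible closed subsets starting with `T` and
ending with `T'`: no further irreducible closed subset can be inserted. -/
def IsMaxChainBtw (T T' : IrreducibleCloseds α) (p : LTSeries (IrreducibleCloseds α)) : Prop :=
  p.head = T ∧ p.last = T' ∧
    ∀ i : Fin p.length, ∀ Z : IrreducibleCloseds α,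
      ¬ (p.toFun i.castSucc < Z ∧ Z < p.toFun i.succ)

/-- A topological space is catenary if for all irreducible closed subsets `T ⊆ T'`,
every maximal chain of irreducible closed subsets starting with `T` and ending with `T'`
has the same length. -/
def CatenarySpace (α : Type*) [TopologicalSpace α] : Prop :=
  ∀ T T' : IrreducibleCloseds α, T ≤ T' →
    ∀ p q : LTSeries (IrreducibleCloseds α),
      IsMaxChainBtw T T' p → IsMaxChainBtw T T' q → p.length = q.length

/-- A continuous map is catenarious if
`codim(T, T') ≥ codim(cl(f(T)), cl(f(T')))` for all irreducible closed `T ⊆ T'`. -/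
def Catenarious (f : α → β) (hf : Continuous f) : Prop :=
  ∀ T T' : IrreducibleCloseds α, T ≤ T' →
    icCodim (imageIC f hf T) (imageIC f hf T') ≤ icCodim T T'

/-- `T'` is an irreducible component of the subset `s`:
a maximal irreducible subset of `s`. -/
def IsIrredComponentOf (T' s : Set α) : Prop :=
  T' ⊆ s ∧ IsIrreducible T' ∧ ∀ W : Set α, IsIrreducible W → T' ⊆ W → W ⊆ s → W = T'

/-- A continuous map `f` is weakly catenarious if for every point `y`, every irreducible
component `T'` of `f ⁻¹ y`, and every irreducible closed `T ⊆ cl(T')` with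
`codim(T, cl(T')) = 1`, one has `codim(cl(f(T)), cl(f(T'))) ≤ 1`. -/
def WeaklyCatenarious (f : α → β) (hf : Continuous f) : Prop :=
  ∀ y : β, ∀ T' : Set α, ∀ h : IsIrredComponentOf T' (f ⁻¹' {y}),
    ∀ T : IrreducibleCloseds α, (T : Set α) ⊆ closure T' →
      icCodim T ⟨closure T', h.2.1.closure, isClosed_closure⟩ = 1 →
      icCodim (imageIC f hf T)
        ⟨closure (f '' T'), (h.2.1.image f hf.continuousOn).closure, isClosed_closure⟩ ≤ 1

/-- A space is biequidimensional if all maximal chains of irreducible closed subsets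
have the same length. -/
def BiequidimensionalSpace (α : Type*) [TopologicalSpace α] : Prop :=
  ∀ p q : LTSeries (IrreducibleCloseds α),
    (IsMin p.head ∧ IsMax p.last ∧ ∀ i : Fin p.length, ∀ Z : IrreducibleCloseds α,
      ¬ (p.toFun i.castSucc < Z ∧ Z < p.toFun i.succ)) →
    (IsMin q.head ∧ IsMax q.last ∧ ∀ i : Fin q.length, ∀ Z : IrreducibleCloseds α,
      ¬ (q.toFun i.castSucc < Z ∧ Z < q.toFun i.succ)) →
    p.length = q.length

/-- `x` is a generic point of (an irreducible component of) the fiber `f ⁻¹ y`: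
it lies in the fiber and admits no strict generalization inside the fiber. -/
def IsFiberGeneric (f : α → β) (y : β) (x : α) : Prop :=
  f x = y ∧ ∀ z : α, f z = y → x ∈ closure {z} → z ∈ closure {x}

end TopDefs

/-- A morphism of schemes is flat if for every point the induced map of local rings
(stalks) is flat. -/
def SchemeHomFlat {X Y : AlgebraicGeometry.Scheme} (f : X ⟶ Y) : Prop :=
  ∀ x : X, RingHom.Flat (f.stalkMap x).hom

/-!
An integral morphism `f` is closed, hence specializing, and by incomparability for integral ring
maps no point of a fibre specializes to another one. So `T ↦ cl(f(T))` is strictly monotone and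
chains below `cl(f(T))` lift to chains below `T`: it preserves heights. Putting a chain from
`cl(f(T))` to `cl(f(T'))` on top of a longest chain below `cl(f(T))` gives
`ht T + codim(f T, f T') ≤ ht T'`. In `X`, saturated chains from minimal elements through `T` and
`T'` up to a common irreducible component have the same length by catenarity and
equicodimensionality, so `ht T' ≤ ht T + codim(T, T')`, and the finite `ht T` cancels.
-/

open Order

namespace RelSeries

open scoped SetRel

variable {α : Type*} {r : SetRel α α}

lemma head_insertNth (p : RelSeries r) (i : Fin p.length) (a : α) (h₁ : p i.castSucc ~[r] a)
    (h₂ : a ~[r] p i.succ) : (p.insertNth i a h₁ h₂).head = p.head := by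
  change Fin.insertNth (α := fun _ => α) i.succ.castSucc a p.toFun 0 = p.toFun 0
  rw [Fin.insertNth_apply_below (by simp [Fin.lt_def])]
  simp

lemma last_insertNth (p : RelSeries r) (i : Fin p.length) (a : α) (h₁ : p i.castSucc ~[r] a)
    (h₂ : a ~[r] p i.succ) : (p.insertNth i a h₁ h₂).last = p.last := by
  change Fin.insertNth (α := fun _ => α) i.succ.castSucc a p.toFun (Fin.last _) =
    p.toFun (Fin.last _)
  rw [Fin.insertNth_apply_above (by simp [Fin.lt_def]), eq_rec_constant]
  rfl

end RelSeries

namespace LTSeries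

variable {γ : Type*} [PartialOrder γ]

def IsSaturated (p : LTSeries γ) : Prop :=
  ∀ i : Fin p.length, p i.castSucc ⋖ p i.succ

lemma IsSaturated.smash {p q : LTSeries γ} (hp : p.IsSaturated) (hq : q.IsSaturated)
    (h : p.last = q.head) : IsSaturated (p.smash q h) := by
  refine Fin.addCases (fun i => ?_) (fun i => ?_)
  · have := hp i
    rwa [← RelSeries.smash_castAdd h, ← RelSeries.smash_succ_castAdd h] at this
  · have := hq i
    rwa [← RelSeries.smash_natAdd h, ← RelSeries.smash_succ_natAdd h] at this

lemma exists_last_eq_of_last_le (p : LTSeries γ) {b : γ} (h : p.last ≤ b) :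
    ∃ q : LTSeries γ, q.head = p.head ∧ q.last = b ∧ p.length ≤ q.length := by
  rcases h.eq_or_lt with h | h
  · exact ⟨p, rfl, h, le_rfl⟩
  · exact ⟨p.snoc b h, by simp, by simp, by simp⟩

theorem exists_isSaturated [FiniteDimensionalOrder γ] (q : LTSeries γ) :
    ∃ p : LTSeries γ, p.head = q.head ∧ p.last = q.last ∧ q.length ≤ p.length ∧
      p.IsSaturated := by
  by_cases hq : q.IsSaturated
  · exact ⟨q, rfl, rfl, le_rfl, hq⟩
  obtain ⟨i, hi⟩ := not_forall.mp hq
  obtain ⟨z, hz₁, hz₂⟩ : ∃ z, q i.castSucc < z ∧ z < q i.succ := by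
    by_contra! h
    exact hi ⟨q.strictMono i.castSucc_lt_succ, fun z hz₁ hz₂ => h z hz₁ hz₂⟩
  obtain ⟨p, hh, hl, hlen, hp⟩ := exists_isSaturated (q.insertNth i z hz₁ hz₂)
  simp only [RelSeries.insertNth_length] at hlen
  exact ⟨p, hh.trans (RelSeries.head_insertNth ..), hl.trans (RelSeries.last_insertNth ..),
    by omega, hp⟩
termination_by (LTSeries.longestOf γ).length - q.length
decreasing_by
  have := longestOf_is_longest (q.insertNth i z hz₁ hz₂)
  simp only [RelSeries.insertNth_length] at this ⊢
  omega

lemma length_le_chainHeight_Ioc (p : LTSeries γ) :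
    (p.length : ℕ∞) ≤ (Set.Ioc p.head p.last).chainHeight (· < ·) := by
  have hg : StrictMono fun i : Fin p.length => p i.succ := p.strictMono.comp Fin.strictMono_succ
  calc (p.length : ℕ∞) = ENat.card (Fin p.length) := by simp
    _ ≤ (Set.range fun i : Fin p.length => p i.succ).encard := hg.injective.encard_range
    _ ≤ _ := Set.encard_le_chainHeight_of_isChain _ _ ?_ hg.monotone.isChain_range.lt_of_le
  rintro _ ⟨i, rfl⟩
  exact ⟨p.strictMono i.succ_pos, p.monotone (Fin.le_last _)⟩

end LTSeries

section

open LTSeries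

variable {γ : Type*} [PartialOrder γ]

lemma Set.exists_ltSeries_of_isChain {n : ℕ} {t : Set γ} (hc : IsChain (· < ·) t)
    (ht : t.encard = n + 1) : ∃ p : LTSeries γ, p.length = n ∧ ∀ i, p i ∈ t := by
  induction n generalizing t with
  | zero =>
    obtain ⟨x, rfl⟩ := Set.encard_eq_one.mp (by simpa using ht)
    exact ⟨RelSeries.singleton _ x, rfl, fun _ => rfl⟩
  | succ m ih =>
    have hfin : t.Finite := Set.finite_of_encard_eq_coe ht
    obtain ⟨x, hx⟩ := hfin.exists_maximal (Set.encard_ne_zero.mp (by simp [ht]))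
    obtain ⟨p, hplen, hp⟩ := ih (hc.mono Set.sdiff_subset)
      (by rw [Set.encard_sdiff_singleton_of_mem hx.1, ht]; norm_cast)
    have hlast : p.last < x := by
      obtain ⟨hmem, hne⟩ := hp (Fin.last _)
      exact (hc hmem hx.1 hne).resolve_right fun h => h.not_ge (hx.2 hmem h.le)
    refine ⟨p.snoc x hlast, by simp [hplen], fun i => ?_⟩
    obtain ⟨j, hj⟩ | hi := RelSeries.mem_snoc.mp ⟨i, rfl⟩
    · exact hj ▸ (hp j).1
    · rw [hi]
      exact hx.1

lemma exists_ltSeries_of_le_chainHeight_Ioc {a b : γ} (hab : a ≤ b) {n : ℕ}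
    (hn : (n : ℕ∞) ≤ (Set.Ioc a b).chainHeight (· < ·)) :
    ∃ p : LTSeries γ, p.head = a ∧ p.last = b ∧ n ≤ p.length := by
  cases n with
  | zero =>
    obtain ⟨p, hh, hl, -⟩ := exists_last_eq_of_last_le (RelSeries.singleton _ a) hab
    exact ⟨p, hh, hl, Nat.zero_le _⟩
  | succ m =>
    obtain ⟨t, hts, htc, hchain⟩ := Set.exists_isChain_of_le_chainHeight (m + 1) hn
    obtain ⟨s, hslen, hs⟩ := Set.exists_ltSeries_of_isChain hchain (by rw [htc]; norm_cast)
    have hmem : ∀ i, a < s i ∧ s i ≤ b := fun i => Set.mem_Ioc.mp (hts (hs i))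
    obtain ⟨p, hh, hl, hlen⟩ := exists_last_eq_of_last_le (s.cons a (hmem 0).1)
      ((RelSeries.last_cons ..).trans_le (hmem (Fin.last _)).2)
    have hcons := RelSeries.cons_length s a (hmem 0).1
    exact ⟨p, hh.trans (RelSeries.head_cons ..), hl, by omega⟩

lemma height_add_length_le_height_last (p : LTSeries γ) :
    height p.head + p.length ≤ height p.last := by
  induction p using RelSeries.inductionOn with
  | singleton x => simp
  | cons p x hx ih =>
    rw [RelSeries.head_cons, RelSeries.last_cons, RelSeries.cons_length]
    calc height x + (p.length + 1 : ℕ)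
        = height x + 1 + p.length := by push_cast; ring
      _ ≤ height p.head + p.length := by gcongr; exact height_add_one_le hx
      _ ≤ height p.last := ih

lemma height_add_le_height_of_le_chainHeight_Ioc {a b : γ} (hab : a ≤ b) {n : ℕ}
    (hn : (n : ℕ∞) ≤ (Set.Ioc a b).chainHeight (· < ·)) : height a + n ≤ height b := by
  obtain ⟨p, rfl, rfl, hlen⟩ := exists_ltSeries_of_le_chainHeight_Ioc hab hn
  calc height p.head + n ≤ height p.head + p.length := by gcongr
    _ ≤ height p.last := height_add_length_le_height_last p

section FiniteDimensional

variable [FiniteDimensionalOrder γ]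

lemma exists_isSaturated_head_last {a b : γ} (hab : a ≤ b) :
    ∃ p : LTSeries γ, p.head = a ∧ p.last = b ∧ p.IsSaturated := by
  obtain ⟨q, hqh, hql, -⟩ := exists_last_eq_of_last_le (RelSeries.singleton _ a) hab
  obtain ⟨p, hph, hpl, -, hp⟩ := q.exists_isSaturated
  exact ⟨p, hph.trans hqh, hpl.trans hql, hp⟩

lemma height_ne_top_of_finiteDimensionalOrder (a : γ) : height a ≠ ⊤ := by
  intro h
  have := height_le_krullDim a
  rw [h] at this
  exact krullDim_ne_top_of_finiteDimensionalOrder (top_le_iff.mp this)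

lemma exists_isSaturated_isMin_head (b : γ) :
    ∃ p : LTSeries γ, p.last = b ∧ IsMin p.head ∧ p.IsSaturated ∧
      (p.length : ℕ∞) = height b := by
  obtain ⟨n, hn⟩ := ENat.ne_top_iff_exists.mp (height_ne_top_of_finiteDimensionalOrder b)
  obtain ⟨q, hql, hqlen⟩ := exists_series_of_height_eq_coe b hn.symm
  obtain ⟨p, hph, hpl, hlen, hp⟩ := q.exists_isSaturated
  have hpb : p.last = b := hpl.trans hql
  have hheight : (p.length : ℕ∞) = height b :=
    le_antisymm (hpb ▸ length_le_height_last) (by rw [← hn, ← hqlen]; exact_mod_cast hlen)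
  refine ⟨p, hpb, ?_, hp, hheight⟩
  by_contra hmin
  obtain ⟨c, hc⟩ := not_isMin_iff.mp hmin
  have := length_le_height_last (p := p.cons c hc)
  rw [RelSeries.last_cons, hpb, ← hheight, RelSeries.cons_length] at this
  exact absurd this (by norm_cast; omega)

lemma exists_le_isMax (a : γ) : ∃ c, a ≤ c ∧ IsMax c := by
  obtain ⟨n, hn⟩ := ENat.ne_top_iff_exists.mp (coheight_lt_top a).ne
  obtain ⟨p, hph, hplen⟩ := exists_series_of_coheight_eq_coe a hn.symm
  refine ⟨p.last, hph ▸ p.head_le_last, ?_⟩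
  by_contra hmax
  obtain ⟨c, hc⟩ := not_isMax_iff.mp hmax
  have := length_le_coheight_head (p := p.snoc c hc)
  rw [RelSeries.head_snoc, hph, ← hn, RelSeries.snoc_length, hplen] at this
  exact absurd this (by norm_cast; omega)

end FiniteDimensional

def IsCatenaryOrder (γ : Type*) [PartialOrder γ] : Prop :=
  ∀ p q : LTSeries γ, p.IsSaturated → q.IsSaturated → p.head = q.head → p.last = q.last →
    p.length = q.length

namespace IsCatenaryOrder

variable [FiniteDimensionalOrder γ] (hcat : IsCatenaryOrder γ)
include hcat

lemma length_eq_chainHeight_Ioc {p : LTSeries γ} (hp : p.IsSaturated) :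
    (p.length : ℕ∞) = (Set.Ioc p.head p.last).chainHeight (· < ·) := by
  refine le_antisymm p.length_le_chainHeight_Ioc (ENat.forall_natCast_le_iff_le.mp fun n hn => ?_)
  obtain ⟨q, hqh, hql, hqlen⟩ := exists_ltSeries_of_le_chainHeight_Ioc p.head_le_last hn
  obtain ⟨r, hrh, hrl, hqr, hr⟩ := q.exists_isSaturated
  rw [hcat p r hp hr (hrh.trans hqh).symm (hrl.trans hql).symm]
  exact_mod_cast hqlen.trans hqr

lemma height_le_height_add_chainHeight_Ioc
    (hequi : ∀ c : γ, IsMax c → ∀ a a' : γ, IsMin a → IsMin a' → a ≤ c → a' ≤ c →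
      (Set.Ioc a c).chainHeight (· < ·) = (Set.Ioc a' c).chainHeight (· < ·))
    {a b : γ} (hab : a ≤ b) : height b ≤ height a + (Set.Ioc a b).chainHeight (· < ·) := by
  obtain ⟨p, hpl, hpmin, hp, -⟩ := exists_isSaturated_isMin_head a
  obtain ⟨p', hp'l, hp'min, hp', hp'len⟩ := exists_isSaturated_isMin_head b
  obtain ⟨q, hqh, hql, hq⟩ := exists_isSaturated_head_last hab
  obtain ⟨c, hbc, hc⟩ := exists_le_isMax b
  obtain ⟨r, hrh, hrl, hr⟩ := exists_isSaturated_head_last hbc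
  have hpq : p.last = q.head := hpl.trans hqh.symm
  have hqr : (p.smash q hpq).last = r.head := by simp [hql, hrh]
  have hp'r : p'.last = r.head := hp'l.trans hrh.symm
  -- `p ++ q ++ r` and `p' ++ r` are saturated chains from minimal elements to the maximal `c`,
  -- so catenarity and `hequi` give them the same length
  have hlong := hcat.length_eq_chainHeight_Ioc ((hp.smash hq hpq).smash hr hqr)
  have hshort := hcat.length_eq_chainHeight_Ioc (hp'.smash hr hp'r)
  have hcodim := hequi c hc p.head p'.head hpmin hp'min
    ((hpl ▸ p.head_le_last).trans (hab.trans hbc)) ((hp'l ▸ p'.head_le_last).trans hbc)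
  simp only [RelSeries.head_smash, RelSeries.last_smash, RelSeries.smash_length, hrl]
    at hlong hshort
  have hlen : p'.length = p.length + q.length := by
    have := hlong.trans (hcodim.trans hshort.symm)
    norm_cast at this
    omega
  calc height b = p'.length := hp'len.symm
    _ = p.length + q.length := by rw [hlen]; push_cast; rfl
    _ ≤ height a + (Set.Ioc a b).chainHeight (· < ·) := by
      gcongr
      · exact hpl ▸ length_le_height_last
      · exact hqh ▸ hql ▸ q.length_le_chainHeight_Ioc

end IsCatenaryOrder

end

section Topology

variable {α β : Type*} [TopologicalSpace α] [TopologicalSpace β]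

lemma CatenarySpace.isCatenaryOrder (h : CatenarySpace α) :
    IsCatenaryOrder (IrreducibleCloseds α) := by
  have hmax : ∀ p : LTSeries (IrreducibleCloseds α), p.IsSaturated →
      IsMaxChainBtw p.head p.last p :=
    fun p hp => ⟨rfl, rfl, fun i _ hZ => (hp i).2 hZ.1 hZ.2⟩
  intro p q hp hq hhead hlast
  exact h _ _ p.head_le_last p q (hmax p hp) (hhead ▸ hlast ▸ hmax q hq)

lemma ptIC_le_ptIC_iff {x y : α} : ptIC x ≤ ptIC y ↔ y ⤳ x :=
  specializes_iff_closure_subset.symm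

lemma ptIC_injective [T0Space α] : Function.Injective (ptIC : α → IrreducibleCloseds α) :=
  fun _ _ h => (inseparable_iff_closure_eq.mpr (congrArg SetLike.coe h)).eq

lemma exists_ptIC_eq [QuasiSober α] (T : IrreducibleCloseds α) : ∃ x, ptIC x = T :=
  ⟨T.isIrreducible.genericPoint,
    IrreducibleCloseds.ext (T.isIrreducible.closure_genericPoint T.isClosed)⟩

lemma imageIC_ptIC {f : α → β} (hf : Continuous f) (x : α) :
    imageIC f hf (ptIC x) = ptIC (f x) :=
  IrreducibleCloseds.ext (by simp [imageIC, ptIC, closure_image_closure hf])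

lemma imageIC_mono {f : α → β} (hf : Continuous f) : Monotone (imageIC f hf) :=
  fun _ _ h => closure_mono (Set.image_mono h)

def IncomparableFibers (f : α → β) : Prop :=
  ∀ ⦃x x' : α⦄, x ⤳ x' → f x = f x' → x = x'

lemma imageIC_strictMono [QuasiSober α] [T0Space β] {f : α → β} (hf : Continuous f)
    (hinc : IncomparableFibers f) : StrictMono (imageIC f hf) := by
  intro T T' hlt
  obtain ⟨x, rfl⟩ := exists_ptIC_eq T
  obtain ⟨x', rfl⟩ := exists_ptIC_eq T'
  refine (imageIC_mono hf hlt.le).lt_of_ne fun h => hlt.ne ?_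
  rw [imageIC_ptIC, imageIC_ptIC] at h
  rw [hinc (ptIC_le_ptIC_iff.mp hlt.le) (ptIC_injective h).symm]

lemma exists_le_imageIC_eq [QuasiSober α] [QuasiSober β] {f : α → β} (hf : Continuous f)
    (hspec : SpecializingMap f) {T : IrreducibleCloseds α} {W : IrreducibleCloseds β}
    (hW : W ≤ imageIC f hf T) : ∃ S ≤ T, imageIC f hf S = W := by
  obtain ⟨x, rfl⟩ := exists_ptIC_eq T
  obtain ⟨w, rfl⟩ := exists_ptIC_eq W
  rw [imageIC_ptIC, ptIC_le_ptIC_iff] at hW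
  obtain ⟨y, hxy, rfl⟩ := hspec hW
  exact ⟨ptIC y, ptIC_le_ptIC_iff.mpr hxy, imageIC_ptIC hf y⟩

lemma height_imageIC [QuasiSober α] [QuasiSober β] [T0Space β] {f : α → β} (hf : Continuous f)
    (hspec : SpecializingMap f) (hinc : IncomparableFibers f) (T : IrreducibleCloseds α) :
    height (imageIC f hf T) = height T := by
  refine (height_eq_of_strictMono _ (imageIC_strictMono hf hinc) (fun T W hW => ?_) T).symm
  obtain ⟨S, hST, rfl⟩ := exists_le_imageIC_eq hf hspec hW.le
  exact ⟨S, hST.lt_of_ne (by rintro rfl; exact hW.ne rfl), rfl⟩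

end Topology

lemma PrimeSpectrum.incomparableFibers_comap {R S : Type*} [CommRing R] [CommRing S]
    {φ : R →+* S} (hφ : φ.IsIntegral) : IncomparableFibers (PrimeSpectrum.comap φ) := by
  intro p q hpq he
  let := φ.toAlgebra
  have : Algebra.IsIntegral R S := ⟨hφ⟩
  by_contra hne
  have hlt : p < q := ((PrimeSpectrum.le_iff_specializes p q).mpr hpq).lt_of_ne hne
  exact (Ideal.IsIntegral.comap_lt_comap (R := R) hlt).ne (congrArg PrimeSpectrum.asIdeal he)

namespace AlgebraicGeometry

lemma Scheme.Hom.incomparableFibers {X Y : Scheme} (f : X ⟶ Y) [IsIntegralHom f] :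
    IncomparableFibers f.base := by
  intro x x' hxx' he
  obtain ⟨_, ⟨V, hV, rfl⟩, hxV, -⟩ :=
    Y.isBasis_affineOpens.exists_subset_of_mem_open (Set.mem_univ (f.base x)) isOpen_univ
  replace hV : IsAffineOpen V := hV
  have hU : IsAffineOpen (f ⁻¹ᵁ V) := hV.preimage f
  have hx'V : f.base x' ∈ V := he ▸ hxV
  obtain ⟨p, rfl⟩ : x ∈ Set.range hU.fromSpec.base := by rw [hU.range_fromSpec]; exact hxV
  obtain ⟨p', rfl⟩ : x' ∈ Set.range hU.fromSpec.base := by rw [hU.range_fromSpec]; exact hx'V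
  have hsq := hV.SpecMap_appLE_fromSpec f hU le_rfl
  have hφ : (f.appLE V (f ⁻¹ᵁ V) le_rfl).hom.IsIntegral := by
    rw [← Scheme.Hom.app_eq_appLE]
    exact f.isIntegral_app V hV
  congr 1
  refine PrimeSpectrum.incomparableFibers_comap hφ ?_ ?_
  · exact hU.fromSpec.isOpenEmbedding.toIsInducing.specializes_iff.mp hxx'
  · apply hV.fromSpec.isOpenEmbedding.injective
    have hpt := fun q => congrArg (fun g => g.base q) hsq
    exact (hpt p).trans (he.trans (hpt p').symm)

end AlgebraicGeometry

theorem statement0_general (X Y : AlgebraicGeometry.Scheme)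
    (hdX : topologicalKrullDim X ≠ ⊤)
    (hcX : CatenarySpace X)
    (f : X ⟶ Y) [AlgebraicGeometry.IsIntegralHom f]
    -- every irreducible component `C` of `X` is equicodimensional: all minimal
    -- irreducible closed subsets of `C` have the same codimension in `C`
    (hequi : ∀ C : IrreducibleCloseds X, IsMax C →
      ∀ T T' : IrreducibleCloseds X, IsMin T → IsMin T' → T ≤ C → T' ≤ C →
        icCodim T C = icCodim T' C) :
    Catenarious f.base f.base.hom.continuous := by
  intro T T' hTT'
  have : Nonempty (IrreducibleCloseds X) := ⟨T⟩
  have : FiniteDimensionalOrder (IrreducibleCloseds X) :=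
    finiteDimensionalOrder_iff_krullDim_ne_bot_and_top.mpr ⟨krullDim_ne_bot_iff.mpr ‹_›, hdX⟩
  have hheight := height_imageIC f.base.hom.continuous f.isClosedMap.specializingMap
    f.incomparableFibers
  refine ENat.forall_natCast_le_iff_le.mp fun n hn => ?_
  have hY := height_add_le_height_of_le_chainHeight_Ioc (imageIC_mono _ hTT') hn
  rw [hheight, hheight] at hY
  have hX := hcX.isCatenaryOrder.height_le_height_add_chainHeight_Ioc hequi hTT'
  exact (WithTop.add_le_add_iff_left (height_ne_top_of_finiteDimensionalOrder T)).mp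
    (hY.trans hX)

/-- An integral morphism between catenary Noetherian schemes of finite
Krull dimension whose source has equicodimensional irreducible components is catenarious. -/
theorem statement0 (X Y : AlgebraicGeometry.Scheme)
    [AlgebraicGeometry.IsNoetherian X] [AlgebraicGeometry.IsNoetherian Y]
    (hdX : topologicalKrullDim X ≠ ⊤) (hdY : topologicalKrullDim Y ≠ ⊤)
    (hcX : CatenarySpace X) (hcY : CatenarySpace Y)
    (f : X ⟶ Y) [AlgebraicGeometry.IsIntegralHom f]
    -- every irreducible component `C` of `X` is equicodimensional: all minimal
    -- irreducible closed subsets of `C` have the same codimension in `C`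
    (hequi : ∀ C : IrreducibleCloseds X, IsMax C →
      ∀ T T' : IrreducibleCloseds X, IsMin T → IsMin T' → T ≤ C → T' ≤ C →
        icCodim T C = icCodim T' C) :
    Catenarious f.base f.base.hom.continuous :=
  statement0_general X Y hdX hcX f hequi
end

section
/- Let X and Y be sober Noetherian topological spaces of finite dimension whose topologies are catenary, and let f : X → Y be a continuous map. If for every pair of irreducible closed subsets T ⊆ T′ of X with codim(T, T′) = 1 one has codim(cl(f(T)), cl(f(T′))) ≤ 1, then f is catenarious, i.e. codim(T, T″) ≥ codim(cl(f(T)), cl(f(T″))) for all irreducible closed subsets T ⊆ T″ of X. -/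
/-!
When `codim(T, T'')` is a finite `n`, a longest chain from `T` to `T''` cannot be refined, so
it is a saturated chain `T = T₀ ⋖ T₁ ⋖ ⋯ ⋖ Tₙ = T''`. Each step has codimension one, so its
image has codimension at most one. In a catenary space of finite dimension codimension is
additive, `codim(a, c) = codim(a, b) + codim(b, c)`, since gluing saturated chains from `a` to
`b` and from `b` to `c` gives a saturated chain from `a` to `c`. Summing along the chain gives
`codim(cl f(T), cl f(T'')) ≤ n`.
-/

open TopologicalSpace

theorem RelSeries.head_insertNth_s1 {α : Type*} {r : SetRel α α} (p : RelSeries r) (i : Fin p.length)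
    (a : α) (h₁ : (p i.castSucc, a) ∈ r) (h₂ : (a, p i.succ) ∈ r) :
    (p.insertNth i a h₁ h₂).head = p.head := by
  change Fin.insertNth (α := fun _ => α) i.succ.castSucc a p 0 = p 0
  rw [Fin.insertNth_apply_below (by simp [Fin.lt_def])]
  simp

theorem RelSeries.last_insertNth_s1 {α : Type*} {r : SetRel α α} (p : RelSeries r) (i : Fin p.length)
    (a : α) (h₁ : (p i.castSucc, a) ∈ r) (h₂ : (a, p i.succ) ∈ r) :
    (p.insertNth i a h₁ h₂).last = p.last := by
  change Fin.insertNth (α := fun _ => α) i.succ.castSucc a p (Fin.last _) = p (Fin.last _)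
  rw [Fin.insertNth_apply_above (by simp [Fin.lt_def])]
  simp only [eq_rec_constant]
  rfl

namespace Order

variable {P : Type*} [PartialOrder P]

-- `icCodim T T'` unfolds to `codim T T'` in `IrreducibleCloseds α`.
noncomputable def codim (a b : P) : ℕ∞ := (Set.Ioc a b).chainHeight (· < ·)

theorem codim_self (a : P) : codim a a = 0 := by
  simp [codim]

theorem codim_eq_one_of_covBy {a b : P} (h : a ⋖ b) : codim a b = 1 := by
  rw [codim, h.Ioc_eq, ← Set.encard_eq_chainHeight_of_isChain _ IsChain.singleton,
    Set.encard_singleton]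

theorem _root_.LTSeries.length_le_codim (p : LTSeries P) :
    (p.length : ℕ∞) ≤ codim p.head p.last := by
  have hmono : StrictMono (p ∘ Fin.succ) := p.strictMono.comp Fin.strictMono_succ
  have hchain : IsChain (· < ·) (Set.range (p ∘ Fin.succ)) := by
    rintro _ ⟨i, rfl⟩ _ ⟨j, rfl⟩ hne
    rcases lt_trichotomy i j with h | rfl | h
    · exact Or.inl (hmono h)
    · exact absurd rfl hne
    · exact Or.inr (hmono h)
  calc (p.length : ℕ∞) = ENat.card (Fin p.length) := by simp
    _ ≤ (Set.range (p ∘ Fin.succ)).encard := hmono.injective.encard_range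
    _ ≤ codim p.head p.last := by
      refine Set.encard_le_chainHeight_of_isChain _ _ ?_ hchain
      rintro _ ⟨i, rfl⟩
      exact ⟨p.strictMono (Fin.succ_pos i), p.monotone (Fin.le_last _)⟩

theorem _root_.IsChain.exists_ltSeries {a : P} {t : Set P} (ht : IsChain (· < ·) t)
    (hat : ∀ x ∈ t, a < x) {n : ℕ} (hn : t.encard = n) :
    ∃ p : LTSeries P, p.head = a ∧ p.last ∈ insert a t ∧ p.length = n := by
  induction n generalizing t with
  | zero => exact ⟨RelSeries.singleton _ a, rfl, Set.mem_insert a t, rfl⟩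
  | succ n ih =>
    obtain ⟨m, hm⟩ := (Set.finite_of_encard_eq_coe hn).exists_maximal
      (Set.encard_ne_zero.mp (by simp [hn]))
    have hlt : ∀ x ∈ t \ {m}, x < m := fun x hx =>
      (ht hx.1 hm.1 hx.2).resolve_right fun h => h.not_ge (hm.2 hx.1 h.le)
    obtain ⟨p, hhead, hlast, hlen⟩ := ih (ht.mono Set.sdiff_subset) (fun x hx => hat x hx.1)
      (by rw [Set.encard_sdiff_singleton_of_mem hm.1, hn]; rfl)
    have hpm : p.last < m := by
      rcases hlast with h | h
      · exact h ▸ hat m hm.1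
      · exact hlt _ h
    exact ⟨p.snoc m hpm, by simp [hhead], by simp [hm.1], by simp [hlen]⟩

variable (P) in
abbrev CovBySeries : Type _ := RelSeries {(x, y) : P × P | x ⋖ y}

def CovBySeries.toLTSeries (p : CovBySeries P) : LTSeries P := p.ofLE fun _ h => CovBy.lt h

theorem CovBySeries.head_le_last (p : CovBySeries P) : p.head ≤ p.last :=
  p.toLTSeries.head_le_last

theorem exists_covBySeries_of_codim_eq {a b : P} (hab : a ≤ b) {n : ℕ} (h : codim a b = n) :
    ∃ p : CovBySeries P, p.head = a ∧ p.last = b ∧ p.length = n := by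
  -- A chain of `n` elements of `Ioc a b` is a longest series from `a`; it must end at `b` and
  -- admit no insertion, since either would produce a series of length `n + 1`.
  obtain ⟨t, htab, htn, ht⟩ := Set.exists_isChain_of_le_chainHeight n h.ge
  obtain ⟨p, hhead, hlast, hlen⟩ := ht.exists_ltSeries (fun x hx => (htab hx).1) htn
  have hlong : ∀ q : LTSeries P, q.head = a → q.last = b → q.length ≤ n := by
    rintro q rfl rfl
    exact_mod_cast h ▸ q.length_le_codim
  have hpb : p.last = b := by
    by_contra hne
    have hle : p.last ≤ b := by
      rcases hlast with h | h
      exacts [h ▸ hab, (htab h).2]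
    have := hlong (p.snoc b (hle.lt_of_ne hne)) (by simp [hhead]) (by simp)
    simp [hlen] at this
  have hcov (i : Fin p.length) : p i.castSucc ⋖ p i.succ := by
    refine ⟨p.step i, fun z h₁ h₂ => ?_⟩
    have := hlong (p.insertNth i z h₁ h₂) (by rw [RelSeries.head_insertNth_s1, hhead])
      (by rw [RelSeries.last_insertNth_s1, hpb])
    simp [hlen] at this
  exact ⟨⟨p.length, p, hcov⟩, hhead, hpb, hlen⟩

theorem codim_ne_top (hP : krullDim P ≠ ⊤) (a b : P) : codim a b ≠ ⊤ := by
  intro htop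
  refine hP (krullDim_eq_top_iff.mpr ⟨fun n => ?_⟩)
  obtain ⟨t, htab, htn, ht⟩ := Set.exists_isChain_of_le_chainHeight n (htop ▸ le_top)
  obtain ⟨p, -, -, hlen⟩ := ht.exists_ltSeries (fun x hx => (htab hx).1) htn
  exact ⟨p, hlen⟩

variable (P) in
def IsCatenary : Prop :=
  ∀ p q : CovBySeries P, p.head = q.head → p.last = q.last → p.length = q.length

theorem IsCatenary.codim_add_codim (hcat : IsCatenary P) (hP : krullDim P ≠ ⊤) {a b c : P}
    (hab : a ≤ b) (hbc : b ≤ c) : codim a b + codim b c = codim a c := by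
  obtain ⟨m, hm⟩ := ENat.ne_top_iff_exists.mp (codim_ne_top hP a b)
  obtain ⟨n, hn⟩ := ENat.ne_top_iff_exists.mp (codim_ne_top hP b c)
  obtain ⟨k, hk⟩ := ENat.ne_top_iff_exists.mp (codim_ne_top hP a c)
  obtain ⟨p, hpa, hpb, hpm⟩ := exists_covBySeries_of_codim_eq hab hm.symm
  obtain ⟨q, hqb, hqc, hqn⟩ := exists_covBySeries_of_codim_eq hbc hn.symm
  obtain ⟨s, hsa, hsc, hsk⟩ := exists_covBySeries_of_codim_eq (hab.trans hbc) hk.symm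
  have := hcat (p.smash q (hpb.trans hqb.symm)) s (by simp [hpa, hsa]) (by simp [hqc, hsc])
  rw [← hm, ← hn, ← hk, ← hpm, ← hqn, ← hsk, ← this, RelSeries.smash_length]
  push_cast
  rfl

section Map

variable {Q : Type*} [PartialOrder Q] {g : P → Q}

theorem codim_map_le_length (hcat : IsCatenary Q) (hQ : krullDim Q ≠ ⊤) (hg : Monotone g)
    (hstep : ∀ a b, a ⋖ b → codim (g a) (g b) ≤ 1) (p : CovBySeries P) :
    codim (g p.head) (g p.last) ≤ p.length := by
  induction p using RelSeries.inductionOn with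
  | singleton x => simp [codim_self]
  | cons p x hx ih =>
    rw [RelSeries.head_cons, RelSeries.last_cons]
    calc codim (g x) (g p.last)
        = codim (g x) (g p.head) + codim (g p.head) (g p.last) :=
          (hcat.codim_add_codim hQ (hg hx.le) (hg (CovBySeries.head_le_last p))).symm
      _ ≤ 1 + p.length := add_le_add (hstep _ _ hx) ih
      _ = (p.cons x hx).length := by simp [add_comm]

theorem codim_map_le_codim (hcat : IsCatenary Q) (hQ : krullDim Q ≠ ⊤) (hg : Monotone g)
    (hstep : ∀ a b, a ⋖ b → codim (g a) (g b) ≤ 1) {a b : P} (hab : a ≤ b) :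
    codim (g a) (g b) ≤ codim a b := by
  by_cases htop : codim a b = ⊤
  · simp [htop]
  obtain ⟨n, hn⟩ := ENat.ne_top_iff_exists.mp htop
  obtain ⟨p, rfl, rfl, hlen⟩ := exists_covBySeries_of_codim_eq hab hn.symm
  rw [← hn, ← hlen]
  exact codim_map_le_length hcat hQ hg hstep p

end Map

end Order

theorem CatenarySpace.isCatenary {α : Type*} [TopologicalSpace α] (h : CatenarySpace α) :
    Order.IsCatenary (IrreducibleCloseds α) := fun p q hhead hlast =>
  h p.head p.last p.head_le_last p.toLTSeries q.toLTSeries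
    ⟨rfl, rfl, fun i _ hZ => (p.step i).2 hZ.1 hZ.2⟩
    ⟨hhead.symm, hlast.symm, fun i _ hZ => (q.step i).2 hZ.1 hZ.2⟩

theorem monotone_imageIC {α β : Type*} [TopologicalSpace α] [TopologicalSpace β] (f : α → β)
    (hf : Continuous f) : Monotone (imageIC f hf) := fun _ _ h =>
  closure_mono (Set.image_mono h)

theorem statement1_general {α β : Type*} [TopologicalSpace α] [TopologicalSpace β]
    (hdβ : topologicalKrullDim β ≠ ⊤)
    (hcβ : CatenarySpace β)
    (f : α → β) (hf : Continuous f)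
    (h1 : ∀ T T' : IrreducibleCloseds α, T ≤ T' → icCodim T T' = 1 →
      icCodim (imageIC f hf T) (imageIC f hf T') ≤ 1) :
    Catenarious f hf := fun _ _ hTT' =>
  Order.codim_map_le_codim hcβ.isCatenary hdβ (monotone_imageIC f hf)
    (fun T T' h => h1 T T' h.le (Order.codim_eq_one_of_covBy h)) hTT'

/-- For a continuous map between finite-dimensional sober Noetherian
catenary spaces, if the codimension of images of adjacent (codimension one) pairs of
irreducible closed subsets is at most one, then the map is catenarious. -/
theorem statement1 {α β : Type*} [TopologicalSpace α] [TopologicalSpace β]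
    [QuasiSober α] [T0Space α] [QuasiSober β] [T0Space β]
    [TopologicalSpace.NoetherianSpace α] [TopologicalSpace.NoetherianSpace β]
    (hdα : topologicalKrullDim α ≠ ⊤) (hdβ : topologicalKrullDim β ≠ ⊤)
    (hcα : CatenarySpace α) (hcβ : CatenarySpace β)
    (f : α → β) (hf : Continuous f)
    (h1 : ∀ T T' : IrreducibleCloseds α, T ≤ T' → icCodim T T' = 1 →
      icCodim (imageIC f hf T) (imageIC f hf T') ≤ 1) :
    Catenarious f hf :=
  statement1_general hdβ hcβ f hf h1
end

section
/- Let X and Y be Noetherian schemes of finite Krull dimension whose underlying topological spaces are biequidimensional. Then every finite, flat, and surjective morphism f : X → Y has relative codimension 0: for every point x ∈ X, codim(cl({f(x)}), Y) = codim(cl({x}), X). -/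
open TopologicalSpace

/-! The codimension of `cl {x}` is the coheight of `x` in the specialization order of the
scheme. A flat morphism lifts generalizations (going down), and a finite morphism has discrete
fibres, so no specialization inside a fibre is proper (incomparability). Hence `f` is strictly
monotone for the specialization order and every chain of generalizations of `f x` lifts to one
of `x`, so the two coheights agree. -/

open Order

theorem IsChain.encard_le_coheight {α : Type*} [Preorder α] {a : α} {t : Set α}
    (htc : IsChain (· < ·) t) (hta : t ⊆ Set.Ioi a) (hfin : t.Finite) :
    t.encard ≤ coheight a := by
  obtain ⟨n, hn⟩ := ENat.ne_top_iff_exists.mp hfin.encard_lt_top.ne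
  induction n generalizing a t with
  | zero => simp [← hn]
  | succ n ih =>
    obtain ⟨b, hb⟩ := hfin.exists_minimal (Set.encard_pos.mp (by rw [← hn]; positivity))
    have hrest : t \ {b} ⊆ Set.Ioi b := fun w ⟨hwt, hwb⟩ =>
      (htc hb.prop hwt (Ne.symm hwb)).resolve_right (hb.not_lt hwt)
    have hsplit := Set.encard_sdiff_singleton_add_one hb.prop
    have hcard : n = (t \ {b}).encard := by simpa [← hn, eq_comm] using hsplit
    calc t.encard = (t \ {b}).encard + 1 := hsplit.symm
      _ ≤ coheight b + 1 := by
        gcongr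
        exact ih (htc.mono Set.sdiff_subset) hrest hfin.sdiff hcard
      _ ≤ coheight a := coheight_add_one_le (hta hb.prop)

theorem Set.chainHeight_Ioi_eq_coheight {α : Type*} [Preorder α] (a : α) :
    (Set.Ioi a).chainHeight (· < ·) = coheight a := by
  refine le_antisymm ?_ (coheight_le fun p hp => ?_)
  · refine ENat.forall_natCast_le_iff_le.mp fun n hn => ?_
    obtain ⟨t, hta, htn, htc⟩ := Set.exists_isChain_of_le_chainHeight n hn
    exact htn ▸ htc.encard_le_coheight hta (Set.finite_of_encard_eq_coe htn)
  · have hinj : Function.Injective fun i : Fin p.length => p i.succ :=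
      p.strictMono.injective.comp (Fin.succ_injective _)
    calc (p.length : ℕ∞) ≤ (Set.range fun i : Fin p.length => p i.succ).encard := by
          simpa using hinj.encard_range
      _ ≤ (Set.Ioi a).chainHeight (· < ·) := by
        refine Set.encard_le_chainHeight_of_isChain _ _ ?_ ?_
        · rintro _ ⟨i, rfl⟩
          exact hp ▸ p.strictMono (Fin.succ_pos i)
        · rintro _ ⟨i, rfl⟩ _ ⟨j, rfl⟩ hij
          exact (lt_or_gt_of_ne (ne_of_apply_ne _ hij)).imp (p.strictMono ·) (p.strictMono ·)

theorem spCodim_eq_coheight {α : Type*} [TopologicalSpace α] (T : IrreducibleCloseds α) :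
    spCodim T = coheight T :=
  Set.chainHeight_Ioi_eq_coheight T

section SpecializationOrder

attribute [local instance] specializationOrder

theorem spCodim_ptIC_eq_coheight {α : Type*} [TopologicalSpace α] [QuasiSober α] [T0Space α]
    (x : α) : spCodim (ptIC x) = coheight x := by
  rw [spCodim_eq_coheight, show ptIC x = irreducibleSetEquivPoints.symm x from rfl,
    coheight_orderIso]

theorem GeneralizingMap.coheight_apply_eq {α β : Type*} [TopologicalSpace α]
    [TopologicalSpace β] [T0Space α] [T0Space β] {g : α → β} (hgen : GeneralizingMap g)
    (hg : Continuous g) (hfib : ∀ ⦃a b⦄, a ⤳ b → g a = g b → a = b) (x : α) :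
    coheight (g x) = coheight x := by
  refine (coheight_eq_of_strictMono g (fun a b hab => ?_) (fun a y hay => ?_) x).symm
  · exact (hg.specialization_monotone hab.le).lt_of_ne fun h => hab.ne (hfib hab.le h.symm).symm
  · obtain ⟨a', ha'a, rfl⟩ := hgen hay.le
    exact ⟨a', (show a ≤ a' from ha'a).lt_of_ne (by rintro rfl; exact hay.ne rfl), rfl⟩

end SpecializationOrder

theorem statement10_general {X Y : AlgebraicGeometry.Scheme} (f : X ⟶ Y)
    [AlgebraicGeometry.IsFinite f] (hflat : SchemeHomFlat f) :
    ∀ x : X, spCodim (ptIC (f.base x)) = spCodim (ptIC x) := by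
  intro x
  have : AlgebraicGeometry.Flat f := .of_stalkMap f hflat
  rw [spCodim_ptIC_eq_coheight, spCodim_ptIC_eq_coheight]
  exact (AlgebraicGeometry.Flat.generalizingMap f).coheight_apply_eq f.continuous
    (fun a b hab h => (f.isDiscrete_preimage_singleton (f b)).eq_of_specializes hab h rfl) x

/-- A finite, flat, surjective morphism between biequidimensional
Noetherian schemes of finite Krull dimension has relative codimension `0`:
`codim(cl {f x}, Y) = codim(cl {x}, X)` for every point `x`. -/
theorem statement10 {X Y : AlgebraicGeometry.Scheme} (f : X ⟶ Y)
    [AlgebraicGeometry.IsNoetherian X] [AlgebraicGeometry.IsNoetherian Y]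
    (hdX : topologicalKrullDim X ≠ ⊤) (hdY : topologicalKrullDim Y ≠ ⊤)
    (hbX : BiequidimensionalSpace X) (hbY : BiequidimensionalSpace Y)
    [AlgebraicGeometry.IsFinite f] [AlgebraicGeometry.Surjective f]
    (hflat : SchemeHomFlat f) :
    ∀ x : X, spCodim (ptIC (f.base x)) = spCodim (ptIC x) :=
  statement10_general f hflat
end
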